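/- Let F be a field of characteristic 0, and let K be the 3-dimensional superalgebra with even part F·a and odd part spanned by ξ₁, ξ₂, with products a∘a = a, a∘ξᵢ = ξᵢ∘a = (1/2)ξᵢ, ξ₁∘ξ₂ = -ξ₂∘ξ₁ = a, ξᵢ∘ξᵢ = 0. Then K is simple (no ideals other than 0 and K, nonzero product) but has no unit element (there is no u ∈ K with u∘x = x for all x ∈ K). -/

import Mathlib

/-
The even basis vector `a` acts as the identity on the even part and as `1/2` on the
odd part, so `2 (a∘v) - v` is the even component of `v`, and `x = 2 (x∘a) - x₁ a`. Hence an ideal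
containing `a` is everything, and an ideal contains the even component of each of its elements.
A nonzero `v` has a nonzero even component itself or after multiplying by `ξ₁` or `ξ₂`, because
`ξ₁∘ξ₂ = -ξ₂∘ξ₁ = a`; so every nonzero ideal contains `a`. A left unit `u` would satisfy
`u∘a = a`, forcing its even coordinate to be `1`, and then `u∘ξ₁ = (1/2)ξ₁ ≠ ξ₁`.
-/

/-- The multiplication of the 3-dimensional Kaplansky superalgebra `K`, written in
the basis `a` (even), `ξ₁, ξ₂` (odd): an element `(x₁, x₂, x₃)` stands for
`x₁a + x₂ξ₁ + x₃ξ₂`, and the table is `a∘a = a`, `a∘ξᵢ = ξᵢ∘a = (1/2)ξᵢ`,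
`ξ₁∘ξ₂ = -ξ₂∘ξ₁ = a`, `ξᵢ∘ξᵢ = 0`. -/
def KMul {F : Type*} [Field F] : (F × F × F) → (F × F × F) → (F × F × F) :=
  fun x y =>
    (x.1 * y.1 + (x.2.1 * y.2.2 - x.2.2 * y.2.1),
     (2 : F)⁻¹ * (x.1 * y.2.1 + x.2.1 * y.1),
     (2 : F)⁻¹ * (x.1 * y.2.2 + x.2.2 * y.1))

section

variable {F : Type*} [Field F]

def IsKIdeal (I : Submodule F (F × F × F)) : Prop :=
  ∀ x : F × F × F, ∀ y ∈ I, KMul x y ∈ I ∧ KMul y x ∈ I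

theorem KMul_one_one : KMul ((1, 0, 0) : F × F × F) (1, 0, 0) = (1, 0, 0) := by
  simp [KMul]

theorem two_smul_KMul_one_left (h2 : (2 : F) ≠ 0) (v : F × F × F) :
    (2 : F) • KMul (1, 0, 0) v = v + v.1 • (1, 0, 0) := by
  ext <;> simp [KMul, mul_inv_cancel_left₀ h2]; ring

theorem two_smul_KMul_one_right (h2 : (2 : F) ≠ 0) (v : F × F × F) :
    (2 : F) • KMul v (1, 0, 0) = v + v.1 • (1, 0, 0) := by
  ext <;> simp [KMul, mul_inv_cancel_left₀ h2]; ring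

theorem fst_KMul_xi₁ (v : F × F × F) : (KMul v (0, 1, 0)).1 = -v.2.2 := by
  simp [KMul]

theorem fst_KMul_xi₂ (v : F × F × F) : (KMul v (0, 0, 1)).1 = v.2.1 := by
  simp [KMul]

theorem not_exists_KMul_left_unit : ¬ ∃ u : F × F × F, ∀ x, KMul u x = x := by
  rintro ⟨u, hu⟩
  have hu₁ : u.1 = 1 := by simpa [KMul] using congrArg Prod.fst (hu (1, 0, 0))
  have half_eq_one : (2 : F)⁻¹ = 1 := by
    simpa [KMul, hu₁] using congrArg (·.2.1) (hu (0, 1, 0))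
  have two_eq_one : (2 : F) = 1 := inv_eq_one.1 half_eq_one
  exact one_ne_zero (by linear_combination two_eq_one)

namespace IsKIdeal

variable {I : Submodule F (F × F × F)}

theorem fst_smul_one_mem (hI : IsKIdeal I) (h2 : (2 : F) ≠ 0) {v : F × F × F} (hv : v ∈ I) :
    v.1 • ((1, 0, 0) : F × F × F) ∈ I := by
  have : v.1 • ((1, 0, 0) : F × F × F) = (2 : F) • KMul (1, 0, 0) v - v := by
    rw [two_smul_KMul_one_left h2]; abel
  rw [this]
  exact I.sub_mem (I.smul_mem _ (hI _ v hv).1) hv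

theorem exists_mem_fst_ne_zero (hI : IsKIdeal I) {v : F × F × F} (hv : v ∈ I) (hv0 : v ≠ 0) :
    ∃ w ∈ I, w.1 ≠ 0 := by
  by_cases h₁ : v.1 = 0
  · by_cases h₂ : v.2.1 = 0
    · refine ⟨KMul v (0, 1, 0), (hI _ v hv).2, ?_⟩
      rw [fst_KMul_xi₁, neg_ne_zero]
      exact fun h₃ => hv0 (Prod.ext h₁ (Prod.ext h₂ h₃))
    · exact ⟨KMul v (0, 0, 1), (hI _ v hv).2, by rwa [fst_KMul_xi₂]⟩
  · exact ⟨v, hv, h₁⟩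

theorem one_mem (hI : IsKIdeal I) (h2 : (2 : F) ≠ 0) (hI0 : I ≠ ⊥) :
    ((1, 0, 0) : F × F × F) ∈ I := by
  obtain ⟨v, hv, hv0⟩ := Submodule.exists_mem_ne_zero_of_ne_bot hI0
  obtain ⟨w, hw, hw0⟩ := hI.exists_mem_fst_ne_zero hv hv0
  simpa [hw0] using I.smul_mem w.1⁻¹ (hI.fst_smul_one_mem h2 hw)

theorem eq_top_of_one_mem (hI : IsKIdeal I) (h2 : (2 : F) ≠ 0)
    (ha : ((1, 0, 0) : F × F × F) ∈ I) : I = ⊤ := by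
  refine Submodule.eq_top_iff'.2 fun x => ?_
  have : x = (2 : F) • KMul x (1, 0, 0) - x.1 • (1, 0, 0) := by
    rw [two_smul_KMul_one_right h2]; abel
  rw [this]
  exact I.sub_mem (I.smul_mem _ (hI x _ ha).1) (I.smul_mem _ ha)

theorem eq_bot_or_eq_top (hI : IsKIdeal I) (h2 : (2 : F) ≠ 0) : I = ⊥ ∨ I = ⊤ :=
  or_iff_not_imp_left.2 fun hI0 => hI.eq_top_of_one_mem h2 (hI.one_mem h2 hI0)

end IsKIdeal

end

/-- The 3-dimensional Kaplansky superalgebra `K` over a field of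
characteristic 0 is simple (nonzero product, and no ideals other than `0` and `K`)
but has no unit element. -/
theorem Kaplansky_simple_nonunital
    (F : Type*) [Field F] [CharZero F] :
    (∃ x y : F × F × F, KMul x y ≠ 0) ∧
    (∀ I : Submodule F (F × F × F),
      (∀ x : F × F × F, ∀ y ∈ I, KMul x y ∈ I ∧ KMul y x ∈ I) →
      I = ⊥ ∨ I = ⊤) ∧
    ¬ (∃ u : F × F × F, ∀ x : F × F × F, KMul u x = x) :=
  ⟨⟨(1, 0, 0), (1, 0, 0), by simp [KMul_one_one]⟩,
    fun _ hI => IsKIdeal.eq_bot_or_eq_top hI two_ne_zero,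
    not_exists_KMul_left_unit⟩
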